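/- arXiv:1108.0464 — 3 statements merged into one kernel-verified Lean document; each statement's English description precedes it below -/
import Mathlib

section
/- The inclusion of strong bisimilarity in asynchronous bisimilarity is strict: the CCS processes c.c̄ + τ.∅ and τ.∅ are asynchronously bisimilar but not strongly bisimilar. -/
/-- Asynchronous CCS processes over a set `C` of channels:
`∅ | τ.P | c.P | c̄ | P ∥ P | P + P`. -/
inductive Proc (C : Type) : Type
  | nil : Proc C
  | tau : Proc C → Proc C
  | inp : C → Proc C → Proc C
  | out : C → Proc C
  | par : Proc C → Proc C → Proc C
  | sum : Proc C → Proc C → Proc C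

/-- Labels: input `c`, output `c̄`, internal `τ`. -/
inductive Label (C : Type) : Type
  | inp : C → Label C
  | out : C → Label C
  | tau : Label C

/-- The standard CCS labelled transition system. -/
inductive Step {C : Type} : Proc C → Label C → Proc C → Prop
  | inp (c : C) (P : Proc C) : Step (Proc.inp c P) (Label.inp c) P
  | tau (P : Proc C) : Step (Proc.tau P) Label.tau P
  | out (c : C) : Step (Proc.out c) (Label.out c) Proc.nil
  | parL {P P' : Proc C} {α : Label C} (Q : Proc C) :
      Step P α P' → Step (Proc.par P Q) α (Proc.par P' Q)
  | parR {Q Q' : Proc C} {α : Label C} (P : Proc C) :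
      Step Q α Q' → Step (Proc.par P Q) α (Proc.par P Q')
  | syn {P P' Q Q' : Proc C} {c : C} :
      Step P (Label.inp c) P' → Step Q (Label.out c) Q' →
      Step (Proc.par P Q) Label.tau (Proc.par P' Q')
  | syn' {P P' Q Q' : Proc C} {c : C} :
      Step P (Label.out c) P' → Step Q (Label.inp c) Q' →
      Step (Proc.par P Q) Label.tau (Proc.par P' Q')
  | sumL {P P' : Proc C} {α : Label C} (Q : Proc C) :
      Step P α P' → Step (Proc.sum P Q) α P'
  | sumR {Q Q' : Proc C} {α : Label C} (P : Proc C) :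
      Step Q α Q' → Step (Proc.sum P Q) α Q'

/-- Asynchronous simulation: `τ` and output moves are matched exactly, while
an input move `x →c x'` may be matched either by an input `y →c y'` or by a
`τ` move `y →τ y''` with residual `y' = c̄ ∥ y''`. -/
def AsyncSim {C : Type} (R : Proc C → Proc C → Prop) : Prop :=
  ∀ x y, R x y → ∀ α x', Step x α x' →
    ((α = Label.tau ∨ ∃ c, α = Label.out c) →
        ∃ y', Step y α y' ∧ R x' y') ∧
    (∀ c, α = Label.inp c →
        ∃ y', R x' y' ∧
          (Step y (Label.inp c) y' ∨
            ∃ y'', Step y Label.tau y'' ∧ y' = Proc.par (Proc.out c) y''))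

/-- Asynchronous bisimulation: a simulation whose inverse is a simulation. -/
def AsyncBisim {C : Type} (R : Proc C → Proc C → Prop) : Prop :=
  AsyncSim R ∧ AsyncSim (fun a b => R b a)

/-- Asynchronous bisimilarity. -/
def AsyncBisimilar {C : Type} (x y : Proc C) : Prop :=
  ∃ R, AsyncBisim R ∧ R x y

/-- Strong simulation on the CCS LTS. -/
def StrongSim {C : Type} (R : Proc C → Proc C → Prop) : Prop :=
  ∀ x y, R x y → ∀ α x', Step x α x' → ∃ y', Step y α y' ∧ R x' y'

/-- Strong bisimulation. -/
def StrongBisim {C : Type} (R : Proc C → Proc C → Prop) : Prop :=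
  StrongSim R ∧ StrongSim (fun a b => R b a)

/-- Strong bisimilarity. -/
def StrongBisimilar {C : Type} (x y : Proc C) : Prop :=
  ∃ R, StrongBisim R ∧ R x y


lemma nil_no_step {C : Type} {α : Label C} {x' : Proc C} :
    ¬ Step (Proc.nil : Proc C) α x' := by
  intro h; cases h

lemma parnil_no_step {C : Type} {α : Label C} {x' : Proc C} :
    ¬ Step (Proc.par Proc.nil Proc.nil : Proc C) α x' := by
  intro h
  cases h with
  | parL _ h => exact nil_no_step h
  | parR _ h => exact nil_no_step h
  | syn h _ => exact nil_no_step h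
  | syn' h _ => exact nil_no_step h

/-- The inclusion of strong bisimilarity in asynchronous bisimilarity is
strict: `c.c̄ + τ.∅` and `τ.∅` are asynchronously bisimilar but not strongly
bisimilar. -/
theorem strict_inclusion {C : Type} (c : C) :
    AsyncBisimilar (Proc.sum (Proc.inp c (Proc.out c)) (Proc.tau Proc.nil))
      (Proc.tau Proc.nil) ∧
    ¬ StrongBisimilar (Proc.sum (Proc.inp c (Proc.out c)) (Proc.tau Proc.nil))
      (Proc.tau Proc.nil) := by
  constructor
  · refine ⟨fun x y => (x = Proc.sum (Proc.inp c (Proc.out c)) (Proc.tau Proc.nil) ∧ y = Proc.tau Proc.nil) ∨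
      (x = Proc.out c ∧ y = Proc.par (Proc.out c) Proc.nil) ∨
      (x = Proc.nil ∧ (y = Proc.nil ∨ y = Proc.par Proc.nil Proc.nil)), ⟨?_, ?_⟩, Or.inl ⟨rfl, rfl⟩⟩
    · intro x y hR α x' hs
      rcases hR with ⟨rfl, rfl⟩ | ⟨rfl, rfl⟩ | ⟨rfl, hy⟩
      · -- x = P, y = Q
        cases hs with
        | sumL _ h =>
          cases h
          constructor
          · rintro (h | ⟨d, h⟩) <;> simp_all
          · rintro d h
            cases h
            exact ⟨Proc.par (Proc.out c) Proc.nil, Or.inr (Or.inl ⟨rfl, rfl⟩),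
              Or.inr ⟨Proc.nil, Step.tau _, rfl⟩⟩
        | sumR _ h =>
          cases h
          constructor
          · intro _
            exact ⟨Proc.nil, Step.tau _, Or.inr (Or.inr ⟨rfl, Or.inl rfl⟩)⟩
          · rintro d h; cases h
      · -- x = out c
        cases hs
        constructor
        · intro _
          exact ⟨Proc.par Proc.nil Proc.nil, Step.parL _ (Step.out c),
            Or.inr (Or.inr ⟨rfl, Or.inr rfl⟩)⟩
        · rintro d h; cases h
      · exact absurd hs nil_no_step
    · intro y x hR α y' hs
      rcases hR with ⟨rfl, rfl⟩ | ⟨rfl, rfl⟩ | ⟨rfl, hy⟩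
      · -- y = Q (second arg is P)
        cases hs
        constructor
        · intro _
          exact ⟨Proc.nil, Step.sumR _ (Step.tau _), Or.inr (Or.inr ⟨rfl, Or.inl rfl⟩)⟩
        · rintro d h; cases h
      · -- y = par (out c) nil, x = out c
        cases hs with
        | parL _ h =>
          cases h
          constructor
          · intro _
            exact ⟨Proc.nil, Step.out c, Or.inr (Or.inr ⟨rfl, Or.inr rfl⟩)⟩
          · rintro d h; cases h
        | parR _ h => exact absurd h nil_no_step
        | syn h _ => cases h
        | syn' _ h => exact absurd h nil_no_step
      · rcases hy with rfl | rfl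
        · exact absurd hs nil_no_step
        · exact absurd hs parnil_no_step
  · rintro ⟨R, ⟨hsim, _⟩, hR⟩
    obtain ⟨y', hy', _⟩ := hsim _ _ hR (Label.inp c) (Proc.out c)
      (Step.sumL _ (Step.inp c (Proc.out c)))
    cases hy'
end

section
/- Asynchronous bisimilarity ∼ of CCS processes, viewed via the dialgebraic semantics, is a back-and-forth bisimulation: if x ∼ y and (c̄,x) →τ_f x' (i.e., either x →c x' or x →τ x'' with x' = c̄ ∥ x''), then there is y' with (c̄,y) →τ_f y' and x' ∼ y'. -/
/-- Observations of the CCS dialgebra: outputs and `τ`. -/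
inductive Obs (C : Type) : Type
  | out : C → Obs C
  | tau : Obs C

/-- Plain dialgebra transitions, rule (run): `x →α_f x'` iff `x →α x'` in the
LTS, for `α` an output or `τ`. -/
def DPlain {C : Type} (x : Proc C) (o : Obs C) (x' : Proc C) : Prop :=
  match o with
  | Obs.out c => Step x (Label.out c) x'
  | Obs.tau => Step x Label.tau x'

/-- Experiment transitions `(c̄,x) →τ_f x'`: rule (in) `x →c x'`, or rule
(store) `x →τ x''` with `x' = c̄ ∥ x''`. -/
def DExp {C : Type} (c : C) (x x' : Proc C) : Prop :=
  Step x (Label.inp c) x' ∨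
    ∃ x'', Step x Label.tau x'' ∧ x' = Proc.par (Proc.out c) x''

/-- Back-and-forth simulation for the CCS dialgebra. -/
def BFSim {C : Type} (R : Proc C → Proc C → Prop) : Prop :=
  ∀ x y, R x y →
    (∀ o x', DPlain x o x' → ∃ y', DPlain y o y' ∧ R x' y') ∧
    (∀ c x', DExp c x x' → ∃ y', DExp c y y' ∧ R x' y')

/-- Back-and-forth bisimulation. -/
def BFBisim {C : Type} (R : Proc C → Proc C → Prop) : Prop :=
  BFSim R ∧ BFSim (fun a b => R b a)

/-- Back-and-forth bisimilarity of the CCS dialgebra. -/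
def BFBisimilar {C : Type} (x y : Proc C) : Prop :=
  ∃ R, BFBisim R ∧ R x y

lemma eq_sim {C : Type} : AsyncSim (fun a b : Proc C => a = b) := by
  intro x y h α x' hs; subst h
  exact ⟨fun _ => ⟨x', hs, rfl⟩, fun c hc => ⟨x', rfl, Or.inl (hc ▸ hs)⟩⟩

lemma eq_sim' {C : Type} : AsyncSim (fun a b : Proc C => b = a) := by
  intro x y h α x' hs; subst h
  exact ⟨fun _ => ⟨x', hs, rfl⟩, fun c hc => ⟨x', rfl, Or.inl (hc ▸ hs)⟩⟩

lemma asyncBisimilar_refl {C : Type} (p : Proc C) : AsyncBisimilar p p :=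
  ⟨fun a b => a = b, ⟨eq_sim, eq_sim'⟩, rfl⟩

lemma asyncBisimilar_symm {C : Type} {p q : Proc C} :
    AsyncBisimilar p q → AsyncBisimilar q p
  | ⟨R, ⟨h1, h2⟩, hr⟩ => ⟨fun a b => R b a, ⟨h2, h1⟩, hr⟩

/-- One-step unfolding of asynchronous bisimilarity. -/
lemma bis_step {C : Type} {x y : Proc C} (h : AsyncBisimilar x y) :
    ∀ (α : Label C) (x' : Proc C), Step x α x' →
      ((α = Label.tau ∨ ∃ c, α = Label.out c) →
          ∃ y', Step y α y' ∧ AsyncBisimilar x' y') ∧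
      (∀ c, α = Label.inp c →
          ∃ y', AsyncBisimilar x' y' ∧
            (Step y (Label.inp c) y' ∨
              ∃ y'', Step y Label.tau y'' ∧ y' = Proc.par (Proc.out c) y'')) := by
  obtain ⟨R, hR, hr⟩ := h
  intro α x' hs
  have hm := hR.1 x y hr α x' hs
  exact ⟨fun h' => (hm.1 h').elim (fun y' hy => ⟨y', hy.1, ⟨R, hR, hy.2⟩⟩),
    fun c hc => (hm.2 c hc).elim (fun y' hy => ⟨y', ⟨R, hR, hy.1⟩, hy.2⟩)⟩

/-- Closure of asynchronous bisimilarity under output/nil parallel contexts,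
nil-unit absorption, swapping of output buffers, and transitivity. -/
inductive UpTo {C : Type} : Proc C → Proc C → Prop
  | base {p q} : AsyncBisimilar p q → UpTo p q
  | ctx (d : C) {p q} : UpTo p q →
      UpTo (Proc.par (Proc.out d) p) (Proc.par (Proc.out d) q)
  | ctxn {p q} : UpTo p q → UpTo (Proc.par Proc.nil p) (Proc.par Proc.nil q)
  | unitL {p q} : UpTo p q → UpTo (Proc.par Proc.nil p) q
  | unitR {p q} : UpTo p q → UpTo p (Proc.par Proc.nil q)
  | swap (d e : C) (p : Proc C) :
      UpTo (Proc.par (Proc.out d) (Proc.par (Proc.out e) p))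
           (Proc.par (Proc.out e) (Proc.par (Proc.out d) p))
  | trans {p q r} : UpTo p q → UpTo q r → UpTo p r

lemma UpTo.refl {C : Type} (p : Proc C) : UpTo p p :=
  UpTo.base (asyncBisimilar_refl p)

lemma UpTo.symm {C : Type} {p q : Proc C} (h : UpTo p q) : UpTo q p := by
  induction h with
  | base h => exact UpTo.base (asyncBisimilar_symm h)
  | ctx d _ ih => exact UpTo.ctx d ih
  | ctxn _ ih => exact UpTo.ctxn ih
  | unitL _ ih => exact UpTo.unitR ih
  | unitR _ ih => exact UpTo.unitL ih
  | swap d e p => exact UpTo.swap e d p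
  | trans _ _ ih1 ih2 => exact UpTo.trans ih2 ih1

lemma UpTo_sim {C : Type} {p q : Proc C} (h : UpTo p q) :
    ∀ (α : Label C) (p' : Proc C), Step p α p' →
      ((α = Label.tau ∨ ∃ c, α = Label.out c) →
          ∃ q', Step q α q' ∧ UpTo p' q') ∧
      (∀ c, α = Label.inp c →
          ∃ q', UpTo p' q' ∧
            (Step q (Label.inp c) q' ∨
              ∃ q'', Step q Label.tau q'' ∧ q' = Proc.par (Proc.out c) q'')) := by
  induction h with
  | @base p q h =>
      intro α p' hs
      have hm := bis_step h α p' hs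
      exact ⟨fun h' => (hm.1 h').elim (fun q' hq => ⟨q', hq.1, UpTo.base hq.2⟩),
        fun c hc => (hm.2 c hc).elim (fun q' hq => ⟨q', UpTo.base hq.1, hq.2⟩)⟩
  | @ctx d p q hU ih =>
      intro α p' hs
      cases hs with
      | parL _ h =>
          cases h
          refine ⟨fun _ => ⟨Proc.par Proc.nil q, Step.parL q (Step.out d), UpTo.ctxn hU⟩,
            fun c hc => by cases hc⟩
      | parR _ h =>
          have hm := ih α _ h
          constructor
          · intro hα
            obtain ⟨q', hq, hU'⟩ := hm.1 hα
            exact ⟨Proc.par (Proc.out d) q', Step.parR _ hq, UpTo.ctx d hU'⟩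
          · intro c hc
            obtain ⟨q', hU', hcase⟩ := hm.2 c hc
            cases hcase with
            | inl hin =>
                exact ⟨Proc.par (Proc.out d) q', UpTo.ctx d hU',
                  Or.inl (Step.parR _ hin)⟩
            | inr hst =>
                obtain ⟨q'', hτ, rfl⟩ := hst
                refine ⟨Proc.par (Proc.out c) (Proc.par (Proc.out d) q''),
                  ?_, Or.inr ⟨Proc.par (Proc.out d) q'', Step.parR _ hτ, rfl⟩⟩
                exact UpTo.trans (UpTo.ctx d hU') (UpTo.swap d c q'')
      | syn h1 _ => cases h1
      | syn' h1 h2 =>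
          cases h1
          obtain ⟨q', hU', hcase⟩ := (ih _ _ h2).2 d rfl
          refine ⟨fun _ => ?_, fun c hc => by cases hc⟩
          cases hcase with
          | inl hin =>
              exact ⟨Proc.par Proc.nil q', Step.syn' (Step.out d) hin, UpTo.ctxn hU'⟩
          | inr hst =>
              obtain ⟨q'', hτ, rfl⟩ := hst
              exact ⟨Proc.par (Proc.out d) q'', Step.parR _ hτ, UpTo.unitL hU'⟩
  | @ctxn p q hU ih =>
      intro α p' hs
      cases hs with
      | parL _ h => cases h
      | syn h1 _ => cases h1
      | syn' h1 _ => cases h1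
      | parR _ h =>
          have hm := ih α _ h
          constructor
          · intro hα
            obtain ⟨q', hq, hU'⟩ := hm.1 hα
            exact ⟨Proc.par Proc.nil q', Step.parR _ hq, UpTo.ctxn hU'⟩
          · intro c hc
            obtain ⟨q', hU', hcase⟩ := hm.2 c hc
            cases hcase with
            | inl hin =>
                exact ⟨Proc.par Proc.nil q', UpTo.ctxn hU', Or.inl (Step.parR _ hin)⟩
            | inr hst =>
                obtain ⟨q'', hτ, rfl⟩ := hst
                refine ⟨Proc.par (Proc.out c) (Proc.par Proc.nil q''),
                  ?_, Or.inr ⟨Proc.par Proc.nil q'', Step.parR _ hτ, rfl⟩⟩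
                exact UpTo.trans (UpTo.unitL hU')
                  (UpTo.ctx c (UpTo.unitR (UpTo.refl q'')))
  | @unitL p q hU ih =>
      intro α p' hs
      cases hs with
      | parL _ h => cases h
      | syn h1 _ => cases h1
      | syn' h1 _ => cases h1
      | parR _ h =>
          have hm := ih α _ h
          constructor
          · intro hα
            obtain ⟨q', hq, hU'⟩ := hm.1 hα
            exact ⟨q', hq, UpTo.unitL hU'⟩
          · intro c hc
            obtain ⟨q', hU', hcase⟩ := hm.2 c hc
            exact ⟨q', UpTo.unitL hU', hcase⟩
  | @unitR p q hU ih =>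
      intro α p' hs
      have hm := ih α _ hs
      constructor
      · intro hα
        obtain ⟨q', hq, hU'⟩ := hm.1 hα
        exact ⟨Proc.par Proc.nil q', Step.parR _ hq, UpTo.unitR hU'⟩
      · intro c hc
        obtain ⟨q', hU', hcase⟩ := hm.2 c hc
        cases hcase with
        | inl hin =>
            exact ⟨Proc.par Proc.nil q', UpTo.unitR hU', Or.inl (Step.parR _ hin)⟩
        | inr hst =>
            obtain ⟨q'', hτ, rfl⟩ := hst
            refine ⟨Proc.par (Proc.out c) (Proc.par Proc.nil q''),
              ?_, Or.inr ⟨Proc.par Proc.nil q'', Step.parR _ hτ, rfl⟩⟩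
            exact UpTo.trans hU' (UpTo.ctx c (UpTo.unitR (UpTo.refl q'')))
  | swap d e p =>
      intro α p' hs
      cases hs with
      | parL _ h =>
          cases h
          refine ⟨fun _ => ?_, fun c hc => by cases hc⟩
          refine ⟨Proc.par (Proc.out e) (Proc.par Proc.nil p),
            Step.parR _ (Step.parL _ (Step.out d)), ?_⟩
          exact UpTo.unitL (UpTo.ctx e (UpTo.unitR (UpTo.refl p)))
      | parR _ h =>
          cases h with
          | parL _ h' =>
              cases h'
              refine ⟨fun _ => ?_, fun c hc => by cases hc⟩
              refine ⟨Proc.par Proc.nil (Proc.par (Proc.out d) p),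
                Step.parL _ (Step.out e), ?_⟩
              exact UpTo.unitR (UpTo.ctx d (UpTo.unitL (UpTo.refl p)))
          | parR _ h' =>
              constructor
              · intro _
                exact ⟨Proc.par (Proc.out e) (Proc.par (Proc.out d) _),
                  Step.parR _ (Step.parR _ h'), UpTo.swap d e _⟩
              · intro c hc
                subst hc
                exact ⟨Proc.par (Proc.out e) (Proc.par (Proc.out d) _),
                  UpTo.swap d e _, Or.inl (Step.parR _ (Step.parR _ h'))⟩
          | syn h1 _ => cases h1
          | syn' h1 h2 =>
              cases h1
              refine ⟨fun _ => ?_, fun c hc => by cases hc⟩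
              refine ⟨Proc.par Proc.nil (Proc.par (Proc.out d) _),
                Step.syn' (Step.out e) (Step.parR _ h2), ?_⟩
              exact UpTo.unitR (UpTo.ctx d (UpTo.unitL (UpTo.refl _)))
      | syn h1 _ => cases h1
      | syn' h1 h2 =>
          cases h1
          cases h2 with
          | parL _ h' => cases h'
          | parR _ h' =>
              refine ⟨fun _ => ?_, fun c hc => by cases hc⟩
              refine ⟨Proc.par (Proc.out e) (Proc.par Proc.nil _),
                Step.parR _ (Step.syn' (Step.out d) h'), ?_⟩
              exact UpTo.unitL (UpTo.ctx e (UpTo.unitR (UpTo.refl _)))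
  | @trans p q r hpq hqr ih1 ih2 =>
      intro α p' hs
      have hm1 := ih1 α _ hs
      constructor
      · intro hα
        obtain ⟨q', hq, hU1⟩ := hm1.1 hα
        obtain ⟨r', hr, hU2⟩ := (ih2 α _ hq).1 hα
        exact ⟨r', hr, UpTo.trans hU1 hU2⟩
      · intro c hc
        obtain ⟨q', hU1, hcase⟩ := hm1.2 c hc
        cases hcase with
        | inl hin =>
            obtain ⟨r', hU2, hcase2⟩ := (ih2 _ _ hin).2 c rfl
            exact ⟨r', UpTo.trans hU1 hU2, hcase2⟩
        | inr hst =>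
            obtain ⟨q'', hτ, rfl⟩ := hst
            obtain ⟨r'', hrτ, hU2⟩ := (ih2 _ _ hτ).1 (Or.inl rfl)
            exact ⟨Proc.par (Proc.out c) r'',
              UpTo.trans hU1 (UpTo.ctx c hU2), Or.inr ⟨r'', hrτ, rfl⟩⟩

lemma UpTo_bisim {C : Type} : AsyncBisim (@UpTo C) := by
  have hsim : AsyncSim (@UpTo C) := fun x y h α x' hs => UpTo_sim h α x' hs
  refine ⟨hsim, fun x y h α x' hs => ?_⟩
  obtain ⟨h1, h2⟩ := hsim x y (UpTo.symm h) α x' hs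
  exact ⟨fun ha => (h1 ha).elim (fun y' hy => ⟨y', hy.1, UpTo.symm hy.2⟩),
    fun c hc => (h2 c hc).elim (fun y' hy => ⟨y', UpTo.symm hy.1, hy.2⟩)⟩

/-- Asynchronous bisimilarity is a back-and-forth simulation on experiment
transitions: if `x ∼ y` and `(c̄,x) →τ_f x'` then `(c̄,y) →τ_f y'` for some
`y'` with `x' ∼ y'`. -/
theorem async_is_bf_on_experiments {C : Type} (c : C) (x y x' : Proc C)
    (hxy : AsyncBisimilar x y) (hx : DExp c x x') :
    ∃ y', DExp c y y' ∧ AsyncBisimilar x' y' := by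
  cases hx with
  | inl hin =>
      obtain ⟨y', hU, hcase⟩ := (bis_step hxy _ x' hin).2 c rfl
      exact ⟨y', hcase, hU⟩
  | inr h =>
      obtain ⟨x'', hτ, rfl⟩ := h
      obtain ⟨y'', hy, hb⟩ := (bis_step hxy _ x'' hτ).1 (Or.inl rfl)
      exact ⟨Proc.par (Proc.out c) y'', Or.inr ⟨y'', hy, rfl⟩,
        ⟨UpTo, UpTo_bisim, UpTo.ctx c (UpTo.base hb)⟩⟩
end

section
/- Back-and-forth bisimilarity ≃ of the CCS dialgebra is an asynchronous bisimulation: if x ≃ y and x →c x' in the LTS, then there exists y' with x' ≃ y' and either y →c y' or y →τ y'' with y' = c̄ ∥ y''. -/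
/-- Back-and-forth bisimilarity is an asynchronous simulation on input
moves: if `x ≃ y` and `x →c x'` then there is `y'` with `x' ≃ y'` and either
`y →c y'` or `y →τ y''` with `y' = c̄ ∥ y''`. -/
theorem bf_is_async_on_inputs {C : Type} (c : C) (x y x' : Proc C)
    (hxy : BFBisimilar x y) (hx : Step x (Label.inp c) x') :
    ∃ y', BFBisimilar x' y' ∧
      (Step y (Label.inp c) y' ∨
        ∃ y'', Step y Label.tau y'' ∧ y' = Proc.par (Proc.out c) y'') := by
  obtain ⟨R, hR, hxyR⟩ := hxy
  obtain ⟨y', hDy, hR'⟩ := (hR.1 x y hxyR).2 c x' (Or.inl hx)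
  exact ⟨y', ⟨R, hR, hR'⟩, hDy⟩
end
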